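/- arXiv:1301.5096 — 4 statements merged into one kernel-verified Lean document; each statement's English description precedes it below -/
import Mathlib

section
/- Let Θ be a standard Borel measurable space, θ ↦ P_θ a Markov kernel from Θ to a standard Borel measurable space Ω, w a probability measure on Θ, and P_w = ∫ P_θ w(dθ) the mixture measure on Ω. Let Q be a probability measure on Ω such that P_θ ≪ Q for w-almost every θ. Then, with values in the extended nonnegative reals, the compensation identity holds: ∫ D(P_θ‖Q) w(dθ) = ∫ D(P_θ‖P_w) w(dθ) + D(P_w‖Q). -/
open MeasureTheory ProbabilityTheory ENNReal
open scoped Classical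

/-- Kullback–Leibler divergence `D(P‖Q) = ∫ log (dP/dQ) dP`, with value `+∞` when
`P` is not absolutely continuous w.r.t. `Q` or the integral is infinite. -/
noncomputable def klDiv {Ω : Type*} [MeasurableSpace Ω] (P Q : Measure Ω) : ℝ≥0∞ :=
  if P ≪ Q ∧ Integrable (llr P Q) P then ENNReal.ofReal (∫ x, llr P Q x ∂P) else ⊤

section Aux

variable {Ω : Type*} [MeasurableSpace Ω] {P Q : Measure Ω}

lemma aux_max_half (x : ℝ) : max x 0 = (x + |x|) / 2 := by
  rcases le_total 0 x with h | h
  · rw [max_eq_left h, abs_of_nonneg h]; ring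
  · rw [max_eq_right h, abs_of_nonpos h]; ring

lemma aux_ofReal_max_zero (x : ℝ) : ENNReal.ofReal (max x 0) = ENNReal.ofReal x := by
  rcases le_total 0 x with h | h
  · rw [max_eq_left h]
  · rw [max_eq_right h, ENNReal.ofReal_of_nonpos h, ENNReal.ofReal_zero]

/-- Pointwise positive-part identity used to avoid `ℝ≥0∞` subtraction. -/
lemma aux_posPart_identity {a b c : ℝ} (h : a = b + c) :
    ENNReal.ofReal a + ENNReal.ofReal (-b) + ENNReal.ofReal (-c)
      = ENNReal.ofReal b + ENNReal.ofReal c + ENNReal.ofReal (-a) := by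
  have key : max a 0 + (max (-b) 0 + max (-c) 0) = max b 0 + (max c 0 + max (-a) 0) := by
    rw [aux_max_half, aux_max_half, aux_max_half, aux_max_half, aux_max_half, aux_max_half,
      abs_neg, abs_neg, abs_neg]
    linarith
  have h1 : ENNReal.ofReal a + ENNReal.ofReal (-b) + ENNReal.ofReal (-c)
      = ENNReal.ofReal (max a 0 + (max (-b) 0 + max (-c) 0)) := by
    rw [ENNReal.ofReal_add (le_max_right _ _) (add_nonneg (le_max_right _ _) (le_max_right _ _)),
      ENNReal.ofReal_add (le_max_right _ _) (le_max_right _ _),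
      aux_ofReal_max_zero, aux_ofReal_max_zero, aux_ofReal_max_zero, add_assoc]
  have h2 : ENNReal.ofReal b + ENNReal.ofReal c + ENNReal.ofReal (-a)
      = ENNReal.ofReal (max b 0 + (max c 0 + max (-a) 0)) := by
    rw [ENNReal.ofReal_add (le_max_right _ _) (add_nonneg (le_max_right _ _) (le_max_right _ _)),
      ENNReal.ofReal_add (le_max_right _ _) (le_max_right _ _),
      aux_ofReal_max_zero, aux_ofReal_max_zero, aux_ofReal_max_zero, add_assoc]
  rw [h1, h2, key]

lemma aux_neg_llr_le [IsFiniteMeasure P] [IsFiniteMeasure Q] (h : P ≪ Q) :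
    ∀ᵐ x ∂P, -llr P Q x ≤ (Q.rnDeriv P x).toReal - 1 := by
  filter_upwards [Measure.inv_rnDeriv h, Measure.rnDeriv_pos h,
    h.ae_le (Measure.rnDeriv_lt_top P Q)] with x hinv hpos hlt
  have htR : 0 < (P.rnDeriv Q x).toReal := ENNReal.toReal_pos hpos.ne' hlt.ne
  have hQP : (Q.rnDeriv P x).toReal = ((P.rnDeriv Q x).toReal)⁻¹ := by
    rw [← hinv]; simp [ENNReal.toReal_inv]
  have hlog : -llr P Q x = Real.log ((Q.rnDeriv P x).toReal) := by
    rw [llr, ← Real.log_inv, hQP]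
  rw [hlog]
  exact Real.log_le_sub_one_of_pos (by rw [hQP]; positivity)

lemma aux_B_le_one [IsProbabilityMeasure P] [IsProbabilityMeasure Q] (h : P ≪ Q) :
    ∫⁻ x, ENNReal.ofReal (-llr P Q x) ∂P ≤ 1 := by
  have hmono : ∫⁻ x, ENNReal.ofReal (-llr P Q x) ∂P ≤ ∫⁻ x, Q.rnDeriv P x ∂P := by
    refine lintegral_mono_ae ?_
    filter_upwards [aux_neg_llr_le h] with x hx
    calc ENNReal.ofReal (-llr P Q x) ≤ ENNReal.ofReal ((Q.rnDeriv P x).toReal) := by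
          exact ENNReal.ofReal_le_ofReal (by linarith)
      _ ≤ Q.rnDeriv P x := ENNReal.ofReal_toReal_le
  calc ∫⁻ x, ENNReal.ofReal (-llr P Q x) ∂P ≤ ∫⁻ x, Q.rnDeriv P x ∂P := hmono
    _ ≤ Q Set.univ := Measure.lintegral_rnDeriv_le
    _ = 1 := measure_univ

/-- Gibbs' inequality: the KL integrand has nonnegative integral. -/
lemma aux_integral_llr_nonneg [IsProbabilityMeasure P] [IsProbabilityMeasure Q]
    (h : P ≪ Q) (hint : Integrable (llr P Q) P) : 0 ≤ ∫ x, llr P Q x ∂P := by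
  have hi : Integrable (fun x => (Q.rnDeriv P x).toReal) P :=
    Measure.integrable_toReal_rnDeriv
  have hle : ∫ x, -llr P Q x ∂P ≤ ∫ x, ((Q.rnDeriv P x).toReal - 1) ∂P :=
    integral_mono_ae hint.neg (hi.sub (integrable_const 1)) (aux_neg_llr_le h)
  have h2 : ∫ x, ((Q.rnDeriv P x).toReal - 1) ∂P
      = (∫ x, (Q.rnDeriv P x).toReal ∂P) - 1 := by
    rw [integral_sub hi (integrable_const 1)]; simp
  have h3 : ∫ x, (Q.rnDeriv P x).toReal ∂P ≤ 1 := by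
    rw [Measure.integral_toReal_rnDeriv']
    have : (0:ℝ) ≤ (Q.singularPart P Set.univ).toReal := ENNReal.toReal_nonneg
    simp only [measureReal_def, measure_univ, ENNReal.toReal_one]
    linarith
  rw [integral_neg] at hle
  linarith [hle, h2 ▸ hle]

lemma aux_lint_ofReal_eq {f : Ω → ℝ} (hf : Integrable f P) :
    ∫⁻ x, ENNReal.ofReal (f x) ∂P = ENNReal.ofReal (∫ x, max (f x) 0 ∂P) := by
  rw [ofReal_integral_eq_lintegral_ofReal hf.pos_part
    (Filter.Eventually.of_forall fun x => le_max_right _ _)]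
  exact lintegral_congr fun x => (aux_ofReal_max_zero (f x)).symm

lemma aux_integrable_of_finite [IsFiniteMeasure P]
    (hA : ∫⁻ x, ENNReal.ofReal (llr P Q x) ∂P ≠ ∞)
    (hB : ∫⁻ x, ENNReal.ofReal (-llr P Q x) ∂P ≠ ∞) :
    Integrable (llr P Q) P := by
  refine ⟨(measurable_llr _ _).aestronglyMeasurable, ?_⟩
  rw [hasFiniteIntegral_iff_norm]
  have hle : ∀ x, ENNReal.ofReal ‖llr P Q x‖
      ≤ ENNReal.ofReal (llr P Q x) + ENNReal.ofReal (-llr P Q x) := by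
    intro x
    rcases le_total 0 (llr P Q x) with hx | hx
    · rw [Real.norm_eq_abs, abs_of_nonneg hx]; exact le_add_right le_rfl
    · rw [Real.norm_eq_abs, abs_of_nonpos hx]; exact le_add_left le_rfl
  calc ∫⁻ x, ENNReal.ofReal ‖llr P Q x‖ ∂P
      ≤ ∫⁻ x, (ENNReal.ofReal (llr P Q x) + ENNReal.ofReal (-llr P Q x)) ∂P :=
        lintegral_mono hle
    _ = ∫⁻ x, ENNReal.ofReal (llr P Q x) ∂P + ∫⁻ x, ENNReal.ofReal (-llr P Q x) ∂P :=
        lintegral_add_left ((measurable_llr _ _).ennreal_ofReal) _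
    _ < ∞ := by
        rw [lt_top_iff_ne_top]
        exact ENNReal.add_ne_top.mpr ⟨hA, hB⟩

/-- Representation of `klDiv` as a difference of lintegrals of positive parts. -/
lemma aux_klDiv_eq_sub [IsProbabilityMeasure P] [IsProbabilityMeasure Q] (h : P ≪ Q) :
    klDiv P Q = ∫⁻ x, ENNReal.ofReal (llr P Q x) ∂P
      - ∫⁻ x, ENNReal.ofReal (-llr P Q x) ∂P := by
  have hBne : ∫⁻ x, ENNReal.ofReal (-llr P Q x) ∂P ≠ ∞ :=
    fun hcon => by simpa [hcon] using (aux_B_le_one h)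
  by_cases hint : Integrable (llr P Q) P
  · rw [klDiv, if_pos ⟨h, hint⟩]
    have hposint : ∫ x, llr P Q x ∂P = ∫ x, max (llr P Q x) 0 ∂P - ∫ x, max (-llr P Q x) 0 ∂P := by
      have := integral_eq_integral_pos_part_sub_integral_neg_part hint
      simpa [Real.coe_toNNReal', max_comm] using this
    have hBint : Integrable (fun x => -llr P Q x) P := hint.neg
    rw [hposint, ENNReal.ofReal_sub _
        (integral_nonneg (fun x => le_max_right (-llr P Q x) 0)),
      ← aux_lint_ofReal_eq hint, ← aux_lint_ofReal_eq hBint]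
  · rw [klDiv, if_neg (fun hcon => hint hcon.2)]
    have hA : ∫⁻ x, ENNReal.ofReal (llr P Q x) ∂P = ∞ := by
      by_contra hA
      exact hint (aux_integrable_of_finite hA hBne)
    exact (ENNReal.sub_eq_top_iff.mpr ⟨hA, hBne⟩).symm

/-- Gibbs in positive-part form. -/
lemma aux_B_le_A [IsProbabilityMeasure P] [IsProbabilityMeasure Q] (h : P ≪ Q) :
    ∫⁻ x, ENNReal.ofReal (-llr P Q x) ∂P ≤ ∫⁻ x, ENNReal.ofReal (llr P Q x) ∂P := by
  by_cases hA : ∫⁻ x, ENNReal.ofReal (llr P Q x) ∂P = ∞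
  · rw [hA]; exact le_top
  · have hBne : ∫⁻ x, ENNReal.ofReal (-llr P Q x) ∂P ≠ ∞ :=
      fun hcon => by simpa [hcon] using (aux_B_le_one h)
    have hint : Integrable (llr P Q) P := aux_integrable_of_finite hA hBne
    have hgibbs := aux_integral_llr_nonneg h hint
    have hBint : Integrable (fun x => -llr P Q x) P := hint.neg
    rw [aux_lint_ofReal_eq hint, aux_lint_ofReal_eq hBint]
    refine ENNReal.ofReal_le_ofReal ?_
    have := integral_eq_integral_pos_part_sub_integral_neg_part hint
    have heq : ∫ x, llr P Q x ∂P
        = ∫ x, max (llr P Q x) 0 ∂P - ∫ x, max (-llr P Q x) 0 ∂P := by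
      simpa [Real.coe_toNNReal', max_comm] using this
    linarith [heq ▸ hgibbs]

/-- Chain rule for log-likelihood ratios. -/
lemma aux_llr_chain {M : Measure Ω} [IsProbabilityMeasure P] [IsProbabilityMeasure M]
    [IsProbabilityMeasure Q] (hPM : P ≪ M) (hMQ : M ≪ Q) :
    llr P Q =ᵐ[P] fun x => llr P M x + llr M Q x := by
  have hPQ : P ≪ Q := hPM.trans hMQ
  have hmul := Measure.rnDeriv_mul_rnDeriv (ν := M) (κ := Q) hPM
  filter_upwards [hPQ.ae_le hmul, Measure.rnDeriv_pos hPM,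
    hPM.ae_le (Measure.rnDeriv_lt_top P M), hPM.ae_le (Measure.rnDeriv_pos hMQ),
    hPQ.ae_le (Measure.rnDeriv_lt_top M Q)] with x hx hp1 hf1 hp2 hf2
  have h1 : (P.rnDeriv M x).toReal ≠ 0 := (ENNReal.toReal_pos hp1.ne' hf1.ne).ne'
  have h2 : (M.rnDeriv Q x).toReal ≠ 0 := (ENNReal.toReal_pos hp2.ne' hf2.ne).ne'
  simp only [llr, ← hx, Pi.mul_apply, ENNReal.toReal_mul]
  exact Real.log_mul h1 h2

lemma aux_ennreal_arith {x1 x2 x3 y1 y2 y3 : ℝ≥0∞} (e : x1 + x2 + x3 = y1 + y2 + y3)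
    (h2 : x2 ≠ ∞) (h3 : x3 ≠ ∞) (hy3 : y3 ≠ ∞)
    (o1 : y3 ≤ x1) (o2 : x2 ≤ y1) (o3 : x3 ≤ y2) :
    x1 - y3 = (y1 - x2) + (y2 - x3) := by
  rcases eq_or_ne y1 ⊤ with hy1 | hy1
  · have hx1 : x1 = ⊤ := by
      by_contra hx1
      have hne : x1 + x2 + x3 ≠ ⊤ := by
        simp [ENNReal.add_ne_top, hx1, h2, h3]
      rw [e] at hne
      exact hne (by simp [hy1])
    rw [hx1, hy1, ENNReal.sub_eq_top_iff.mpr ⟨rfl, hy3⟩,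
      ENNReal.sub_eq_top_iff.mpr ⟨rfl, h2⟩, top_add]
  · rcases eq_or_ne y2 ⊤ with hy2 | hy2
    · have hx1 : x1 = ⊤ := by
        by_contra hx1
        have hne : x1 + x2 + x3 ≠ ⊤ := by
          simp [ENNReal.add_ne_top, hx1, h2, h3]
        rw [e] at hne
        exact hne (by simp [hy2])
      rw [hx1, hy2, ENNReal.sub_eq_top_iff.mpr ⟨rfl, hy3⟩,
        ENNReal.sub_eq_top_iff.mpr ⟨rfl, h3⟩]
      simp
    · have hx1 : x1 ≠ ⊤ := by
        intro hx1
        have : x1 + x2 + x3 = ⊤ := by simp [hx1]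
        rw [e] at this
        exact (ENNReal.add_ne_top.mpr
          ⟨ENNReal.add_ne_top.mpr ⟨hy1, hy2⟩, hy3⟩) this
      have hsub1 : x1 - y3 ≠ ⊤ := ENNReal.sub_ne_top hx1
      have hsub2 : (y1 - x2) + (y2 - x3) ≠ ⊤ :=
        ENNReal.add_ne_top.mpr ⟨ENNReal.sub_ne_top hy1, ENNReal.sub_ne_top hy2⟩
      rw [← ENNReal.toReal_eq_toReal_iff' hsub1 hsub2]
      have etR : x1.toReal + x2.toReal + x3.toReal = y1.toReal + y2.toReal + y3.toReal := by
        rw [← ENNReal.toReal_add hx1 h2, ← ENNReal.toReal_add (ENNReal.add_ne_top.mpr ⟨hx1, h2⟩) h3,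
          ← ENNReal.toReal_add hy1 hy2,
          ← ENNReal.toReal_add (ENNReal.add_ne_top.mpr ⟨hy1, hy2⟩) hy3, e]
      rw [ENNReal.toReal_add (ENNReal.sub_ne_top hy1) (ENNReal.sub_ne_top hy2),
        ENNReal.toReal_sub_of_le o1 hx1, ENNReal.toReal_sub_of_le o2 hy1,
        ENNReal.toReal_sub_of_le o3 hy2]
      linarith

end Aux

section Mixture

variable {Θ Ω : Type*} [MeasurableSpace Θ] [StandardBorelSpace Θ]
    [MeasurableSpace Ω] [StandardBorelSpace Ω]
    (P : Kernel Θ Ω) [IsMarkovKernel P]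
    (w : Measure Θ) [IsProbabilityMeasure w]

lemma aux_bind_prob : IsProbabilityMeasure (w.bind fun θ => P θ) := by
  constructor
  rw [Measure.bind_apply MeasurableSet.univ P.measurable.aemeasurable]
  simp

lemma aux_bind_ac {Q : Measure Ω} (hac : ∀ᵐ θ ∂w, (P θ) ≪ Q) :
    (w.bind fun θ => P θ) ≪ Q := by
  refine Measure.AbsolutelyContinuous.mk fun A hA hQA => ?_
  rw [Measure.bind_apply hA P.measurable.aemeasurable]
  rw [lintegral_eq_zero_iff (P.measurable_coe hA)]
  filter_upwards [hac] with θ hθ using hθ hQA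

/-- Almost every component of a mixture is absolutely continuous w.r.t. the mixture,
provided the components are a.e. dominated by some common probability measure. -/
lemma aux_ae_ac_bind {Q : Measure Ω} [IsProbabilityMeasure Q] (hac : ∀ᵐ θ ∂w, (P θ) ≪ Q) :
    ∀ᵐ θ ∂w, (P θ) ≪ (w.bind fun θ => P θ) := by
  set f : Θ → Ω → ℝ≥0∞ := fun θ x => Kernel.rnDeriv P (Kernel.const Θ Q) θ x with hf_def
  have hf : Measurable (Function.uncurry f) := Kernel.measurable_rnDeriv _ _
  set g : Ω → ℝ≥0∞ := fun x => ∫⁻ θ, f θ x ∂w with hg_def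
  have hg : Measurable g := hf.lintegral_prod_left
  have hdens : ∀ᵐ θ ∂w, P θ = Q.withDensity (f θ) := by
    filter_upwards [hac] with θ hθ
    have h1 : f θ =ᵐ[Q] (P θ).rnDeriv Q := by
      have h := Kernel.rnDeriv_eq_rnDeriv_measure (κ := P) (η := Kernel.const Θ Q) (a := θ)
      simpa using h
    rw [withDensity_congr_ae h1, Measure.withDensity_rnDeriv_eq _ _ hθ]
  have hM : ∀ A : Set Ω, MeasurableSet A →
      (w.bind fun θ => P θ) A = ∫⁻ x in A, g x ∂Q := by
    intro A hA
    rw [Measure.bind_apply hA P.measurable.aemeasurable]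
    have h1 : ∫⁻ θ, P θ A ∂w = ∫⁻ θ, ∫⁻ x in A, f θ x ∂Q ∂w := by
      refine lintegral_congr_ae ?_
      filter_upwards [hdens] with θ hθ
      rw [hθ, withDensity_apply _ hA]
    rw [h1, lintegral_lintegral_swap hf.aemeasurable]
  set N : Set Ω := {x | g x = 0} with hN_def
  have hN : MeasurableSet N := hg (measurableSet_singleton 0)
  have hMN : (w.bind fun θ => P θ) N = 0 := by
    rw [hM N hN]
    calc ∫⁻ x in N, g x ∂Q = ∫⁻ _ in N, 0 ∂Q :=
          setLIntegral_congr_fun hN (fun x hx => hx)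
      _ = 0 := lintegral_zero
  have hPN : ∀ᵐ θ ∂w, P θ N = 0 := by
    rw [Measure.bind_apply hN P.measurable.aemeasurable] at hMN
    exact (lintegral_eq_zero_iff (P.measurable_coe hN)).mp hMN
  filter_upwards [hac, hPN] with θ hθQ hθN
  refine Measure.AbsolutelyContinuous.mk fun A hA hMA => ?_
  rw [hM A hA] at hMA
  rw [lintegral_eq_zero_iff' hg.aemeasurable.restrict] at hMA
  have hQdiff : Q (A \ N) = 0 := by
    have h0 : Q.restrict A Nᶜ = 0 := by
      rw [Filter.EventuallyEq, ae_iff] at hMA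
      simpa [hN_def, Set.compl_setOf] using hMA
    rw [Measure.restrict_apply hN.compl] at h0
    have hset : A \ N = Nᶜ ∩ A := by
      rw [Set.diff_eq, Set.inter_comm]
    rw [hset]
    exact h0
  have h1 : P θ (A \ N) = 0 := hθQ hQdiff
  have h2 : P θ (A ∩ N) = 0 := by
    have hle : P θ (A ∩ N) ≤ P θ N := by
      apply measure_mono
      exact Set.inter_subset_right
    exact le_antisymm (hle.trans (le_of_eq hθN)) zero_le
  have hcover : P θ A ≤ P θ (A ∩ N) + P θ (A \ N) := by
    have hA' : P θ A = P θ ((A ∩ N) ∪ (A \ N)) := by rw [Set.inter_union_diff]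
    rw [hA']
    exact measure_union_le _ _
  rw [h1, h2, add_zero] at hcover
  exact le_antisymm hcover zero_le

end Mixture

/-- **Compensation identity.** For a Markov kernel `P`, a prior `w` with mixture
`P_w = ∫ P_θ w(dθ)`, and a probability measure `Q` with `P_θ ≪ Q` for `w`-a.e. `θ`,
`∫ D(P_θ‖Q) w(dθ) = ∫ D(P_θ‖P_w) w(dθ) + D(P_w‖Q)`. -/
theorem compensation_identity
    {Θ Ω : Type*} [MeasurableSpace Θ] [StandardBorelSpace Θ]
    [MeasurableSpace Ω] [StandardBorelSpace Ω]
    (P : Kernel Θ Ω) [IsMarkovKernel P]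
    (w : Measure Θ) [IsProbabilityMeasure w]
    (Q : Measure Ω) [IsProbabilityMeasure Q]
    (hac : ∀ᵐ θ ∂w, (P θ) ≪ Q) :
    ∫⁻ θ, klDiv (P θ) Q ∂w
      = ∫⁻ θ, klDiv (P θ) (w.bind (fun θ => P θ)) ∂w
        + klDiv (w.bind (fun θ => P θ)) Q := by
  classical
  set M : Measure Ω := w.bind (fun θ => P θ) with hM_def
  haveI : IsProbabilityMeasure M := aux_bind_prob P w
  have hMQ : M ≪ Q := aux_bind_ac P w hac
  have hacM : ∀ᵐ θ ∂w, (P θ) ≪ M := aux_ae_ac_bind P w hac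
  set u : Θ → Ω → ℝ := fun θ x => Real.log (Kernel.rnDeriv P (Kernel.const Θ Q) θ x).toReal
    with hu_def
  set v : Θ → Ω → ℝ := fun θ x => Real.log (Kernel.rnDeriv P (Kernel.const Θ M) θ x).toReal
    with hv_def
  have hu : Measurable (Function.uncurry u) :=
    (Kernel.measurable_rnDeriv P (Kernel.const Θ Q)).ennreal_toReal.log
  have hv : Measurable (Function.uncurry v) :=
    (Kernel.measurable_rnDeriv P (Kernel.const Θ M)).ennreal_toReal.log
  have hu_ae : ∀ᵐ θ ∂w, ∀ᵐ x ∂(P θ), u θ x = llr (P θ) Q x := by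
    filter_upwards [hac] with θ hθ
    have h1 : Kernel.rnDeriv P (Kernel.const Θ Q) θ =ᵐ[Q] (P θ).rnDeriv Q := by
      have h := Kernel.rnDeriv_eq_rnDeriv_measure (κ := P) (η := Kernel.const Θ Q) (a := θ)
      simpa using h
    filter_upwards [hθ.ae_le h1] with x hx
    simp only [hu_def, llr, hx]
  have hv_ae : ∀ᵐ θ ∂w, ∀ᵐ x ∂(P θ), v θ x = llr (P θ) M x := by
    filter_upwards [hacM] with θ hθ
    have h1 : Kernel.rnDeriv P (Kernel.const Θ M) θ =ᵐ[M] (P θ).rnDeriv M := by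
      have h := Kernel.rnDeriv_eq_rnDeriv_measure (κ := P) (η := Kernel.const Θ M) (a := θ)
      simpa using h
    filter_upwards [hθ.ae_le h1] with x hx
    simp only [hv_def, llr, hx]
  set AQ : Θ → ℝ≥0∞ := fun θ => ∫⁻ x, ENNReal.ofReal (u θ x) ∂(P θ) with hAQ_def
  set BQ : Θ → ℝ≥0∞ := fun θ => ∫⁻ x, ENNReal.ofReal (-u θ x) ∂(P θ) with hBQ_def
  set AM : Θ → ℝ≥0∞ := fun θ => ∫⁻ x, ENNReal.ofReal (v θ x) ∂(P θ) with hAM_def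
  set BM : Θ → ℝ≥0∞ := fun θ => ∫⁻ x, ENNReal.ofReal (-v θ x) ∂(P θ) with hBM_def
  set CA : Θ → ℝ≥0∞ := fun θ => ∫⁻ x, ENNReal.ofReal (llr M Q x) ∂(P θ) with hCA_def
  set CB : Θ → ℝ≥0∞ := fun θ => ∫⁻ x, ENNReal.ofReal (-llr M Q x) ∂(P θ) with hCB_def
  have mAQ : Measurable AQ :=
    Measurable.lintegral_kernel_prod_right (κ := P) hu.ennreal_ofReal
  have mBQ : Measurable BQ :=
    Measurable.lintegral_kernel_prod_right (κ := P) hu.neg.ennreal_ofReal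
  have mAM : Measurable AM :=
    Measurable.lintegral_kernel_prod_right (κ := P) hv.ennreal_ofReal
  have mBM : Measurable BM :=
    Measurable.lintegral_kernel_prod_right (κ := P) hv.neg.ennreal_ofReal
  have mCA : Measurable CA :=
    Measurable.lintegral_kernel_prod_right (κ := P)
      (((measurable_llr M Q).comp measurable_snd).ennreal_ofReal)
  have mCB : Measurable CB :=
    Measurable.lintegral_kernel_prod_right (κ := P)
      (((measurable_llr M Q).comp measurable_snd).neg.ennreal_ofReal)
  have hAQ_ae : ∀ᵐ θ ∂w, AQ θ = ∫⁻ x, ENNReal.ofReal (llr (P θ) Q x) ∂(P θ) := by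
    filter_upwards [hu_ae] with θ hθ
    exact lintegral_congr_ae (hθ.mono fun x hx => by simp only [hx])
  have hBQ_ae : ∀ᵐ θ ∂w, BQ θ = ∫⁻ x, ENNReal.ofReal (-llr (P θ) Q x) ∂(P θ) := by
    filter_upwards [hu_ae] with θ hθ
    exact lintegral_congr_ae (hθ.mono fun x hx => by simp only [hx])
  have hAM_ae : ∀ᵐ θ ∂w, AM θ = ∫⁻ x, ENNReal.ofReal (llr (P θ) M x) ∂(P θ) := by
    filter_upwards [hv_ae] with θ hθ
    exact lintegral_congr_ae (hθ.mono fun x hx => by simp only [hx])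
  have hBM_ae : ∀ᵐ θ ∂w, BM θ = ∫⁻ x, ENNReal.ofReal (-llr (P θ) M x) ∂(P θ) := by
    filter_upwards [hv_ae] with θ hθ
    exact lintegral_congr_ae (hθ.mono fun x hx => by simp only [hx])
  -- the pointwise (in `θ`) compensation identity, in additive form
  have hkey : ∀ᵐ θ ∂w, AQ θ + BM θ + CB θ = AM θ + CA θ + BQ θ := by
    filter_upwards [hac, hacM, hu_ae, hv_ae] with θ h1 h2 h3 h4
    have hchain : llr (P θ) Q =ᵐ[P θ] fun x => llr (P θ) M x + llr M Q x :=
      aux_llr_chain h2 hMQ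
    have hmu : Measurable (fun x => u θ x) := hu.comp measurable_prodMk_left
    have hmv : Measurable (fun x => v θ x) := hv.comp measurable_prodMk_left
    have hpt : ∀ᵐ x ∂(P θ),
        ENNReal.ofReal (u θ x) + ENNReal.ofReal (-v θ x) + ENNReal.ofReal (-llr M Q x)
          = ENNReal.ofReal (v θ x) + ENNReal.ofReal (llr M Q x) + ENNReal.ofReal (-u θ x) := by
      filter_upwards [h3, h4, hchain] with x hx3 hx4 hxc
      refine aux_posPart_identity ?_
      rw [hx3, hx4]
      exact hxc
    calc AQ θ + BM θ + CB θ
        = ∫⁻ x, (ENNReal.ofReal (u θ x) + ENNReal.ofReal (-v θ x)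
            + ENNReal.ofReal (-llr M Q x)) ∂(P θ) := by
          rw [lintegral_add_left (show Measurable (fun x => ENNReal.ofReal (u θ x) + ENNReal.ofReal (-v θ x)) from hmu.ennreal_ofReal.add hmv.neg.ennreal_ofReal),
            lintegral_add_left hmu.ennreal_ofReal]
      _ = ∫⁻ x, (ENNReal.ofReal (v θ x) + ENNReal.ofReal (llr M Q x)
            + ENNReal.ofReal (-u θ x)) ∂(P θ) := lintegral_congr_ae hpt
      _ = AM θ + CA θ + BQ θ := by
          rw [lintegral_add_left (show Measurable (fun x => ENNReal.ofReal (v θ x) + ENNReal.ofReal (llr M Q x)) from hmv.ennreal_ofReal.add (measurable_llr M Q).ennreal_ofReal),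
            lintegral_add_left hmv.ennreal_ofReal]
  have hsum : ∫⁻ θ, AQ θ ∂w + ∫⁻ θ, BM θ ∂w + ∫⁻ θ, CB θ ∂w
      = ∫⁻ θ, AM θ ∂w + ∫⁻ θ, CA θ ∂w + ∫⁻ θ, BQ θ ∂w := by
    rw [← lintegral_add_left mAQ, ← lintegral_add_left (show Measurable (fun θ => AQ θ + BM θ) from mAQ.add mBM),
      ← lintegral_add_left mAM, ← lintegral_add_left (show Measurable (fun θ => AM θ + CA θ) from mAM.add mCA)]
    exact lintegral_congr_ae hkey
  -- identification of the `llr M Q` integrals with lintegrals over the mixture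
  have hCA : ∫⁻ θ, CA θ ∂w = ∫⁻ x, ENNReal.ofReal (llr M Q x) ∂M := by
    have h := Measure.lintegral_bind (m := w) (μ := fun θ => P θ)
      (f := fun x => ENNReal.ofReal (llr M Q x)) P.measurable.aemeasurable
      (measurable_llr M Q).ennreal_ofReal.aemeasurable
    rw [← hM_def] at h
    exact h.symm
  have hCB : ∫⁻ θ, CB θ ∂w = ∫⁻ x, ENNReal.ofReal (-llr M Q x) ∂M := by
    have h := Measure.lintegral_bind (m := w) (μ := fun θ => P θ)
      (f := fun x => ENNReal.ofReal (-llr M Q x)) P.measurable.aemeasurable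
      (measurable_llr M Q).neg.ennreal_ofReal.aemeasurable
    rw [← hM_def] at h
    exact h.symm
  -- order and finiteness facts
  have hBQ_le1 : ∀ᵐ θ ∂w, BQ θ ≤ 1 := by
    filter_upwards [hac, hBQ_ae] with θ h1 h2
    rw [h2]; exact aux_B_le_one h1
  have hBM_le1 : ∀ᵐ θ ∂w, BM θ ≤ 1 := by
    filter_upwards [hacM, hBM_ae] with θ h1 h2
    rw [h2]; exact aux_B_le_one h1
  have hXBQ : ∫⁻ θ, BQ θ ∂w ≤ 1 := by
    calc ∫⁻ θ, BQ θ ∂w ≤ ∫⁻ _, 1 ∂w := lintegral_mono_ae hBQ_le1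
      _ = 1 := by simp
  have hXBM : ∫⁻ θ, BM θ ∂w ≤ 1 := by
    calc ∫⁻ θ, BM θ ∂w ≤ ∫⁻ _, 1 ∂w := lintegral_mono_ae hBM_le1
      _ = 1 := by simp
  have hXCB : ∫⁻ θ, CB θ ∂w ≤ 1 := by
    rw [hCB]; exact aux_B_le_one hMQ
  have hBA_Q : ∀ᵐ θ ∂w, BQ θ ≤ AQ θ := by
    filter_upwards [hac, hAQ_ae, hBQ_ae] with θ h1 h2 h3
    rw [h2, h3]; exact aux_B_le_A h1
  have hBA_M : ∀ᵐ θ ∂w, BM θ ≤ AM θ := by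
    filter_upwards [hacM, hAM_ae, hBM_ae] with θ h1 h2 h3
    rw [h2, h3]; exact aux_B_le_A h1
  have hCBA : ∫⁻ θ, CB θ ∂w ≤ ∫⁻ θ, CA θ ∂w := by
    rw [hCA, hCB]; exact aux_B_le_A hMQ
  -- rewrite both sides using the difference representation
  have hL : ∫⁻ θ, klDiv (P θ) Q ∂w = ∫⁻ θ, (AQ θ - BQ θ) ∂w := by
    refine lintegral_congr_ae ?_
    filter_upwards [hac, hAQ_ae, hBQ_ae] with θ h1 h2 h3
    rw [aux_klDiv_eq_sub h1, h2, h3]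
  have hR : ∫⁻ θ, klDiv (P θ) M ∂w = ∫⁻ θ, (AM θ - BM θ) ∂w := by
    refine lintegral_congr_ae ?_
    filter_upwards [hacM, hAM_ae, hBM_ae] with θ h1 h2 h3
    rw [aux_klDiv_eq_sub h1, h2, h3]
  have hKMQ : klDiv M Q = ∫⁻ θ, CA θ ∂w - ∫⁻ θ, CB θ ∂w := by
    rw [aux_klDiv_eq_sub hMQ, hCA, hCB]
  have hLsub : ∫⁻ θ, (AQ θ - BQ θ) ∂w = ∫⁻ θ, AQ θ ∂w - ∫⁻ θ, BQ θ ∂w :=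
    lintegral_sub mBQ (fun hcon => by simp [hcon] at hXBQ) hBA_Q
  have hRsub : ∫⁻ θ, (AM θ - BM θ) ∂w = ∫⁻ θ, AM θ ∂w - ∫⁻ θ, BM θ ∂w :=
    lintegral_sub mBM (fun hcon => by simp [hcon] at hXBM) hBA_M
  rw [hL, hR, hKMQ, hLsub, hRsub]
  exact aux_ennreal_arith hsum
    (fun hcon => by simp [hcon] at hXBM)
    (fun hcon => by simp [hcon] at hXCB)
    (fun hcon => by simp [hcon] at hXBQ)
    (lintegral_mono_ae hBA_Q) (lintegral_mono_ae hBA_M) hCBA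
end

section
/- Let Θ be a standard Borel measurable space, θ ↦ P_θ a Markov kernel from Θ to a standard Borel measurable space Ω. Then for every probability measure Q on Ω and every probability measure w on Θ, with P_w = ∫ P_θ w(dθ), one has sup_{θ∈Θ} D(P_θ‖Q) ≥ ∫ D(P_θ‖P_w) w(dθ) (in the extended nonnegative reals). Consequently, inf_Q sup_{θ∈Θ} D(P_θ‖Q) ≥ sup_w ∫ D(P_θ‖P_w) w(dθ), where the infimum is over probability measures Q on Ω and the supremum over probability measures w on Θ. -/
open MeasureTheory ProbabilityTheory ENNReal
open scoped Classical

namespace KLAux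

lemma mul_ofReal_neg_log_le_one (a : ℝ≥0∞) :
    a * ENNReal.ofReal (-Real.log a.toReal) ≤ 1 := by
  rcases eq_or_ne a ∞ with rfl | ha
  · simp
  rcases eq_or_ne a 0 with rfl | h0
  · simp
  have ht : 0 < a.toReal := ENNReal.toReal_pos h0 ha
  rcases le_or_gt 1 a.toReal with h1 | h1
  · have : -Real.log a.toReal ≤ 0 := neg_nonpos.2 (Real.log_nonneg h1)
    simp [ENNReal.ofReal_of_nonpos this]
  · have hlog : -Real.log a.toReal ≤ (a.toReal)⁻¹ - 1 := by
      rw [← Real.log_inv]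
      exact Real.log_le_sub_one_of_pos (inv_pos.2 ht)
    calc a * ENNReal.ofReal (-Real.log a.toReal)
        ≤ ENNReal.ofReal a.toReal * ENNReal.ofReal ((a.toReal)⁻¹ - 1) := by
          rw [ENNReal.ofReal_toReal ha]
          exact mul_le_mul_right (ENNReal.ofReal_le_ofReal hlog) _
      _ = ENNReal.ofReal (a.toReal * ((a.toReal)⁻¹ - 1)) :=
          (ENNReal.ofReal_mul ht.le).symm
      _ ≤ 1 := by
          rw [mul_sub, mul_inv_cancel₀ ht.ne', mul_one]
          exact ENNReal.ofReal_le_one.2 (by linarith)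

lemma mul_ofReal_inv_toReal_le_one (a : ℝ≥0∞) :
    a * ENNReal.ofReal (a.toReal)⁻¹ ≤ 1 := by
  rcases eq_or_ne a ∞ with rfl | ha
  · simp
  rcases eq_or_ne a 0 with rfl | h0
  · simp
  have ht : 0 < a.toReal := ENNReal.toReal_pos h0 ha
  calc a * ENNReal.ofReal (a.toReal)⁻¹
      = ENNReal.ofReal (a.toReal * (a.toReal)⁻¹) := by
        rw [ENNReal.ofReal_mul ht.le, ENNReal.ofReal_toReal ha]
    _ ≤ 1 := by rw [mul_inv_cancel₀ ht.ne']; simp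

variable {α : Type*} [MeasurableSpace α] {P ν : Measure α}

lemma meas_neg_llr (P ν : Measure α) :
    Measurable fun x => ENNReal.ofReal (-llr P ν x) :=
  (ENNReal.measurable_ofReal.comp ((measurable_llr P ν).neg))

/-- Lemma B : the negative part of the log-likelihood ratio has `P`-lintegral at most 1. -/
lemma lintegral_ofReal_neg_llr_le [IsFiniteMeasure P] [IsProbabilityMeasure ν]
    (h : P ≪ ν) : ∫⁻ x, ENNReal.ofReal (-llr P ν x) ∂P ≤ 1 := by
  nth_rewrite 1 [← Measure.withDensity_rnDeriv_eq P ν h]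
  rw [lintegral_withDensity_eq_lintegral_mul _ (Measure.measurable_rnDeriv P ν)
    (meas_neg_llr P ν)]
  calc ∫⁻ x, (P.rnDeriv ν * fun x => ENNReal.ofReal (-llr P ν x)) x ∂ν
      ≤ ∫⁻ _, 1 ∂ν := lintegral_mono fun x => mul_ofReal_neg_log_le_one _
    _ = 1 := by simp

/-- Lemma D : `ofReal` of an integral is at most the lintegral of `ofReal`. -/
lemma ofReal_integral_le {f : α → ℝ} (hi : Integrable f P) :
    ENNReal.ofReal (∫ x, f x ∂P) ≤ ∫⁻ x, ENNReal.ofReal (f x) ∂P := by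
  have hfin : ∫⁻ x, ENNReal.ofReal (f x) ∂P ≠ ∞ :=
    ne_top_of_le_ne_top hi.2.ne (lintegral_mono fun x => by
      rw [Real.enorm_eq_ofReal_abs]
      exact ENNReal.ofReal_le_ofReal (le_abs_self _))
  rw [integral_eq_lintegral_pos_part_sub_lintegral_neg_part hi]
  refine le_trans (ENNReal.ofReal_le_ofReal (sub_le_self _ ENNReal.toReal_nonneg)) ?_
  rw [ENNReal.ofReal_toReal hfin]



lemma ennnorm_split (r : ℝ) :
    (‖r‖₊ : ℝ≥0∞) = ENNReal.ofReal r + ENNReal.ofReal (-r) := by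
  rcases le_total 0 r with h | h
  · rw [← enorm_eq_nnnorm, Real.enorm_eq_ofReal_abs, abs_of_nonneg h,
      ENNReal.ofReal_of_nonpos (neg_nonpos.2 h), add_zero]
  · rw [← enorm_eq_nnnorm, Real.enorm_eq_ofReal_abs, abs_of_nonpos h,
      ENNReal.ofReal_of_nonpos h, zero_add]

/-- Lemma C. -/
lemma lintegral_ofReal_le_ofReal_integral_add {f : α → ℝ} (hi : Integrable f P) :
    ∫⁻ x, ENNReal.ofReal (f x) ∂P
      ≤ ENNReal.ofReal (∫ x, f x ∂P) + ∫⁻ x, ENNReal.ofReal (-f x) ∂P := by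
  set A := ∫⁻ x, ENNReal.ofReal (f x) ∂P with hA
  set B := ∫⁻ x, ENNReal.ofReal (-f x) ∂P with hB
  have hAfin : A ≠ ∞ := ne_top_of_le_ne_top hi.2.ne (lintegral_mono fun x => by
    rw [enorm_eq_nnnorm, ennnorm_split]; exact le_self_add)
  have hBfin : B ≠ ∞ := ne_top_of_le_ne_top hi.2.ne (lintegral_mono fun x => by
    rw [enorm_eq_nnnorm, ennnorm_split]; exact le_add_self)
  have : ENNReal.ofReal (∫ x, f x ∂P) = A - B := by
    rw [integral_eq_lintegral_pos_part_sub_lintegral_neg_part hi,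
      ENNReal.ofReal_sub _ ENNReal.toReal_nonneg, ENNReal.ofReal_toReal hAfin,
      ENNReal.ofReal_toReal hBfin]
  rw [this]
  exact le_tsub_add

/-- Nonnegativity of KL divergence. -/
lemma integral_llr_nonneg [IsProbabilityMeasure P] [IsProbabilityMeasure ν]
    (h : P ≪ ν) (hi : Integrable (llr P ν) P) : 0 ≤ ∫ x, llr P ν x ∂P := by
  set f : α → ℝ := fun x => ((P.rnDeriv ν x).toReal)⁻¹ with hf
  have hfm : Measurable f := (Measure.measurable_rnDeriv P ν).ennreal_toReal.inv
  have hf_nn : ∀ x, 0 ≤ f x := fun x => inv_nonneg.2 ENNReal.toReal_nonneg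
  have hlint : ∫⁻ x, ENNReal.ofReal (f x) ∂P ≤ 1 := by
    nth_rewrite 1 [← Measure.withDensity_rnDeriv_eq P ν h]
    rw [lintegral_withDensity_eq_lintegral_mul _ (Measure.measurable_rnDeriv P ν)
      hfm.ennreal_ofReal]
    calc ∫⁻ x, (P.rnDeriv ν * fun x => ENNReal.ofReal (f x)) x ∂ν
        ≤ ∫⁻ _, 1 ∂ν := lintegral_mono fun x => mul_ofReal_inv_toReal_le_one _
      _ = 1 := by simp
  have hfi : Integrable f P := by
    refine ⟨hfm.aestronglyMeasurable, ?_⟩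
    rw [hasFiniteIntegral_iff_ofReal (ae_of_all _ hf_nn)]
    exact lt_of_le_of_lt hlint one_lt_top
  have hint_f : ∫ x, f x ∂P ≤ 1 := by
    rw [integral_eq_lintegral_of_nonneg_ae (ae_of_all _ hf_nn) hfm.aestronglyMeasurable]
    calc (∫⁻ x, ENNReal.ofReal (f x) ∂P).toReal ≤ (1 : ℝ≥0∞).toReal :=
      ENNReal.toReal_mono one_ne_top hlint
      _ = 1 := by simp
  have hmono : ∀ᵐ x ∂P, -llr P ν x ≤ f x - 1 := by
    filter_upwards [Measure.rnDeriv_pos h, h.ae_le (Measure.rnDeriv_lt_top P ν)]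
      with x hpos hlt
    have ht : 0 < (P.rnDeriv ν x).toReal := ENNReal.toReal_pos hpos.ne' hlt.ne
    rw [llr_def]
    calc -Real.log (P.rnDeriv ν x).toReal = Real.log ((P.rnDeriv ν x).toReal)⁻¹ := by
          rw [Real.log_inv]
      _ ≤ ((P.rnDeriv ν x).toReal)⁻¹ - 1 := Real.log_le_sub_one_of_pos (inv_pos.2 ht)
  have : ∫ x, -llr P ν x ∂P ≤ ∫ x, (f x - 1) ∂P :=
    integral_mono_ae hi.neg (hfi.sub (integrable_const 1)) hmono
  rw [integral_neg] at this
  rw [integral_sub hfi (integrable_const 1), integral_const] at this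
  simp only [measure_univ, probReal_univ, mul_one, ENNReal.toReal_one, one_smul, smul_eq_mul] at this
  linarith


end KLAux

open KLAux

lemma key_ineq {Θ Ω : Type*} [MeasurableSpace Θ] [MeasurableSpace Ω]
    [MeasurableSpace.CountablyGenerated Ω]
    (P : Kernel Θ Ω) [IsMarkovKernel P] (Q : Measure Ω) [IsProbabilityMeasure Q]
    (w : Measure Θ) [IsProbabilityMeasure w] :
    ∫⁻ θ, klDiv (P θ) (w.bind (fun θ => P θ)) ∂w ≤ ∫⁻ θ, klDiv (P θ) Q ∂w := by
  set μ : Measure Ω := w.bind (fun θ => P θ) with hμdef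
  have hμ_apply : ∀ {s : Set Ω}, MeasurableSet s → μ s = ∫⁻ θ, P θ s ∂w := by
    intro s hs
    rw [hμdef, Measure.bind_apply hs P.measurable.aemeasurable]
  have hμ_prob : IsProbabilityMeasure μ := by
    constructor
    rw [hμ_apply MeasurableSet.univ]
    simp
  -- trivial case
  by_cases hC : ∫⁻ θ, klDiv (P θ) Q ∂w = ∞
  · rw [hC]; exact le_top
  -- the measurable "good" set E
  set ρ : Θ → Ω → ℝ≥0∞ := Kernel.rnDeriv P (Kernel.const Θ Q) with hρdef
  have hρ_meas : Measurable (Function.uncurry ρ) := Kernel.measurable_rnDeriv _ _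
  have hρ_eq : ∀ θ : Θ, ρ θ =ᵐ[Q] (P θ).rnDeriv Q := by
    intro θ
    have := Kernel.rnDeriv_eq_rnDeriv_measure (κ := P) (η := Kernel.const Θ Q) (a := θ)
    simpa using this
  set E : Set Θ := {θ | P θ ≪ Q} ∩
      {θ | ∫⁻ x, (‖Real.log (ρ θ x).toReal‖₊ : ℝ≥0∞) ∂(P θ) < ∞} with hEdef
  have hE_meas : MeasurableSet E := by
    refine (Kernel.measurableSet_absolutelyContinuous P (Kernel.const Θ Q)).inter ?_
    have hm : Measurable fun θ => ∫⁻ x, (‖Real.log (ρ θ x).toReal‖₊ : ℝ≥0∞) ∂(P θ) := by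
      refine Measurable.lintegral_kernel_prod_right ?_
      exact ((Real.measurable_log.comp hρ_meas.ennreal_toReal).nnnorm).coe_nnreal_ennreal
    exact measurableSet_lt hm measurable_const
  have hE_good : ∀ θ ∈ E, P θ ≪ Q ∧ Integrable (llr (P θ) Q) (P θ) := by
    intro θ hθ
    obtain ⟨hac, hfin⟩ := hθ
    refine ⟨hac, (stronglyMeasurable_llr _ _).aestronglyMeasurable, ?_⟩
    have h_eq : llr (P θ) Q =ᵐ[P θ] fun x => Real.log (ρ θ x).toReal := by
      filter_upwards [hac.ae_le (hρ_eq θ)] with x hx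
      rw [llr_def, hx]
    rw [hasFiniteIntegral_congr h_eq]
    exact hfin
  have hEc_top : ∀ θ ∉ E, klDiv (P θ) Q = ⊤ := by
    intro θ hθ
    rw [klDiv, if_neg]
    intro ⟨hac, hint⟩
    apply hθ
    refine ⟨hac, ?_⟩
    have h_eq : llr (P θ) Q =ᵐ[P θ] fun x => Real.log (ρ θ x).toReal := by
      filter_upwards [hac.ae_le (hρ_eq θ)] with x hx
      rw [llr_def, hx]
    have : HasFiniteIntegral (fun x => Real.log (ρ θ x).toReal) (P θ) :=
      (hasFiniteIntegral_congr h_eq).mp hint.2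
    exact this
  have hwEc : w Eᶜ = 0 := by
    by_contra h0
    apply hC
    refine top_le_iff.mp ?_
    calc (⊤ : ℝ≥0∞) = ⊤ * w Eᶜ := by rw [ENNReal.top_mul h0]
      _ = ∫⁻ θ in Eᶜ, ⊤ ∂w := by rw [setLIntegral_const, mul_comm]
      _ = ∫⁻ θ, Eᶜ.indicator (fun _ => ⊤) θ ∂w := (lintegral_indicator hE_meas.compl _).symm
      _ ≤ ∫⁻ θ, klDiv (P θ) Q ∂w := by
          refine lintegral_mono fun θ => ?_
          by_cases hθ : θ ∈ Eᶜ
          · rw [Set.indicator_of_mem hθ, hEc_top θ hθ]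
          · rw [Set.indicator_of_notMem hθ]; exact zero_le
  have hae_E : ∀ᵐ θ ∂w, θ ∈ E := by
    rw [ae_iff]
    exact hwEc
  -- absolute continuity of the mixture
  have hμQ : μ ≪ Q := by
    refine Measure.AbsolutelyContinuous.mk fun s hs hQs => ?_
    rw [hμ_apply hs]
    have : ∀ᵐ θ ∂w, P θ s = 0 := by
      filter_upwards [hae_E] with θ hθ
      exact (hE_good θ hθ).1 hQs
    rw [lintegral_congr_ae this]
    simp
  -- the null set where the mixture density vanishes
  set N : Set Ω := {x | μ.rnDeriv Q x = 0} with hNdef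
  have hN_meas : MeasurableSet N := (Measure.measurable_rnDeriv μ Q) (measurableSet_singleton 0)
  have hμN : μ N = 0 := by
    nth_rewrite 1 [← Measure.withDensity_rnDeriv_eq μ Q hμQ]
    rw [withDensity_apply _ hN_meas]
    rw [setLIntegral_congr_fun hN_meas (fun x hx => hx)]
    simp
  have haeN : ∀ᵐ θ ∂w, P θ N = 0 := by
    have h0 : ∫⁻ θ, P θ N ∂w = 0 := by rw [← hμ_apply hN_meas, hμN]
    exact (lintegral_eq_zero_iff (P.measurable_coe hN_meas)).mp h0
  -- a.e. θ, P θ ≪ μ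
  have hPμ : ∀ θ, P θ ≪ Q → P θ N = 0 → P θ ≪ μ := by
    intro θ hac hN0
    refine Measure.AbsolutelyContinuous.mk fun s hs hμs => ?_
    have h1 : ∀ᵐ x ∂Q, x ∈ s → μ.rnDeriv Q x = 0 := by
      refine (setLIntegral_eq_zero_iff hs (Measure.measurable_rnDeriv μ Q)).mp ?_
      nth_rewrite 1 [← Measure.withDensity_rnDeriv_eq μ Q hμQ] at hμs
      rwa [withDensity_apply _ hs] at hμs
    have hQsN : Q (s \ N) = 0 := by
      refine measure_mono_null ?_ (ae_iff.mp h1)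
      intro x hx
      simp only [Set.mem_setOf_eq]
      intro hcon
      exact hx.2 (hcon hx.1)
    have : P θ s ≤ P θ (s \ N) + P θ N := by
      refine le_trans (measure_mono ?_) (measure_union_le _ _)
      intro x hx
      by_cases hxN : x ∈ N
      · exact Or.inr hxN
      · exact Or.inl ⟨hx, hxN⟩
    rw [hac hQsN, hN0] at this
    simpa using this
    -- chain rule (a.e. pointwise)
  have hch : ∀ θ, P θ ≪ Q → P θ ≪ μ →
      llr (P θ) Q =ᵐ[P θ] fun x => llr (P θ) μ x + llr μ Q x := by
    intro θ hac hacμ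
    filter_upwards [hac.ae_le (Measure.rnDeriv_mul_rnDeriv hacμ),
      Measure.rnDeriv_pos hacμ, hacμ.ae_le (Measure.rnDeriv_lt_top (P θ) μ),
      hacμ.ae_le (Measure.rnDeriv_pos hμQ), hac.ae_le (Measure.rnDeriv_lt_top μ Q)]
      with x hmul hpos1 hlt1 hpos2 hlt2
    have h1 : 0 < ((P θ).rnDeriv μ x).toReal := ENNReal.toReal_pos hpos1.ne' hlt1.ne
    have h2 : 0 < (μ.rnDeriv Q x).toReal := ENNReal.toReal_pos hpos2.ne' hlt2.ne
    simp only [llr_def]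
    rw [← hmul, Pi.mul_apply, ENNReal.toReal_mul, Real.log_mul h1.ne' h2.ne']
  have hgood : ∀ᵐ θ ∂w, θ ∈ E ∧ P θ ≪ μ := by
    filter_upwards [hae_E, haeN] with θ h1 h2
    exact ⟨h1, hPμ θ (hE_good θ h1).1 h2⟩
  -- the two auxiliary ℝ≥0∞-valued functions
  set g1 : Θ → ℝ≥0∞ := fun θ => ∫⁻ x, ENNReal.ofReal (llr μ Q x) ∂(P θ) with hg1def
  set g2 : Θ → ℝ≥0∞ := fun θ => ∫⁻ x, ENNReal.ofReal (-llr μ Q x) ∂(P θ) with hg2def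
  have hg1_meas : Measurable g1 :=
    Measurable.lintegral_kernel ((measurable_llr μ Q).ennreal_ofReal)
  have hg2_meas : Measurable g2 :=
    Measurable.lintegral_kernel ((measurable_llr μ Q).neg.ennreal_ofReal)
  have hG_def : ∫⁻ θ, g1 θ ∂w = ∫⁻ x, ENNReal.ofReal (llr μ Q x) ∂μ :=
    (MeasureTheory.Measure.lintegral_bind P.measurable.aemeasurable ((measurable_llr μ Q).ennreal_ofReal.aemeasurable)).symm
  have hH_def : ∫⁻ θ, g2 θ ∂w = ∫⁻ x, ENNReal.ofReal (-llr μ Q x) ∂μ :=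
    (MeasureTheory.Measure.lintegral_bind P.measurable.aemeasurable ((measurable_llr μ Q).neg.ennreal_ofReal.aemeasurable)).symm
  have hg2w_le : ∫⁻ θ, g2 θ ∂w ≤ 1 := by
    rw [hH_def]; exact lintegral_ofReal_neg_llr_le hμQ
  have hg2w_fin : ∫⁻ θ, g2 θ ∂w ≠ ∞ := ne_top_of_le_ne_top one_ne_top hg2w_le
  -- bound on the positive part integrals
  have hg1_bound : ∀ᵐ θ ∂w, g1 θ ≤ klDiv (P θ) Q + 2 := by
    filter_upwards [hgood] with θ hth
    obtain ⟨hE1, hacμ⟩ := hth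
    obtain ⟨hac, hint⟩ := hE_good θ hE1
    have hch' := hch θ hac hacμ
    have step1 : g1 θ ≤ ∫⁻ x, (ENNReal.ofReal (llr (P θ) Q x)
        + ENNReal.ofReal (-llr (P θ) μ x)) ∂(P θ) := by
      refine lintegral_mono_ae ?_
      filter_upwards [hch'] with x hx
      have hre : llr μ Q x = llr (P θ) Q x + -(llr (P θ) μ x) := by rw [hx]; ring
      rw [hre]
      exact ENNReal.ofReal_add_le
    have step2 : ∫⁻ x, (ENNReal.ofReal (llr (P θ) Q x)
          + ENNReal.ofReal (-llr (P θ) μ x)) ∂(P θ)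
        = (∫⁻ x, ENNReal.ofReal (llr (P θ) Q x) ∂(P θ))
          + ∫⁻ x, ENNReal.ofReal (-llr (P θ) μ x) ∂(P θ) :=
      lintegral_add_left ((measurable_llr _ _).ennreal_ofReal) _
    have step3 : ∫⁻ x, ENNReal.ofReal (llr (P θ) Q x) ∂(P θ) ≤ klDiv (P θ) Q + 1 := by
      refine le_trans (lintegral_ofReal_le_ofReal_integral_add hint) ?_
      have : klDiv (P θ) Q = ENNReal.ofReal (∫ x, llr (P θ) Q x ∂(P θ)) := by
        simp only [klDiv]; rw [if_pos ⟨hac, hint⟩]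
      rw [this]
      exact add_le_add_right (lintegral_ofReal_neg_llr_le hac) _
    have step4 : ∫⁻ x, ENNReal.ofReal (-llr (P θ) μ x) ∂(P θ) ≤ 1 :=
      lintegral_ofReal_neg_llr_le hacμ
    calc g1 θ ≤ _ := step1
      _ = _ := step2
      _ ≤ (klDiv (P θ) Q + 1) + 1 := add_le_add step3 step4
      _ = klDiv (P θ) Q + 2 := by rw [add_assoc, one_add_one_eq_two]
  have hg1w_fin : ∫⁻ θ, g1 θ ∂w ≠ ∞ := by
    have h1 : ∫⁻ θ, g1 θ ∂w ≤ ∫⁻ θ, (klDiv (P θ) Q + 2) ∂w := lintegral_mono_ae hg1_bound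
    rw [lintegral_add_right' _ aemeasurable_const, lintegral_const] at h1
    refine ne_top_of_le_ne_top ?_ h1
    simp only [measure_univ, mul_one]
    exact ENNReal.add_ne_top.mpr ⟨hC, ofNat_ne_top⟩
  -- integrability of llr μ Q with respect to μ
  have hμ_int : Integrable (llr μ Q) μ := by
    refine ⟨(stronglyMeasurable_llr μ Q).aestronglyMeasurable, ?_⟩
    show (∫⁻ x, (‖llr μ Q x‖₊ : ℝ≥0∞) ∂μ) < ∞
    have hsplit : ∫⁻ x, (‖llr μ Q x‖₊ : ℝ≥0∞) ∂μ
        = (∫⁻ x, ENNReal.ofReal (llr μ Q x) ∂μ) + ∫⁻ x, ENNReal.ofReal (-llr μ Q x) ∂μ := by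
      rw [← lintegral_add_left ((measurable_llr μ Q).ennreal_ofReal)]
      exact lintegral_congr fun x => ennnorm_split _
    rw [hsplit, ← hG_def, ← hH_def]
    exact ENNReal.add_lt_top.mpr ⟨hg1w_fin.lt_top, hg2w_fin.lt_top⟩
  -- the master a.e. statement
  have hmaster : ∀ᵐ θ ∂w,
      Integrable (llr μ Q) (P θ) ∧ Integrable (llr (P θ) μ) (P θ) ∧
      P θ ≪ μ ∧ P θ ≪ Q ∧ Integrable (llr (P θ) Q) (P θ) ∧
      klDiv (P θ) μ = ENNReal.ofReal (∫ x, llr (P θ) μ x ∂(P θ)) ∧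
      (0:ℝ) ≤ ∫ x, llr (P θ) μ x ∂(P θ) ∧
      (∫ x, llr (P θ) μ x ∂(P θ))
        = (∫ x, llr (P θ) Q x ∂(P θ)) - (∫ x, llr μ Q x ∂(P θ)) ∧
      (∫ x, llr μ Q x ∂(P θ)) = (g1 θ).toReal - (g2 θ).toReal ∧
      klDiv (P θ) Q = ENNReal.ofReal (∫ x, llr (P θ) Q x ∂(P θ)) := by
    filter_upwards [hgood, ae_lt_top hg1_meas hg1w_fin, ae_lt_top hg2_meas hg2w_fin]
      with θ hth hg1θ hg2θ
    obtain ⟨hE1, hacμ⟩ := hth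
    obtain ⟨hac, hint⟩ := hE_good θ hE1
    have hch' := hch θ hac hacμ
    have hIμQ : Integrable (llr μ Q) (P θ) := by
      refine ⟨(stronglyMeasurable_llr μ Q).aestronglyMeasurable, ?_⟩
      show (∫⁻ x, (‖llr μ Q x‖₊ : ℝ≥0∞) ∂(P θ)) < ∞
      have hsplit : ∫⁻ x, (‖llr μ Q x‖₊ : ℝ≥0∞) ∂(P θ) = g1 θ + g2 θ := by
        rw [hg1def, hg2def]
        simp only []
        rw [← lintegral_add_left ((measurable_llr μ Q).ennreal_ofReal)]
        exact lintegral_congr fun x => ennnorm_split _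
      rw [hsplit]
      exact ENNReal.add_lt_top.mpr ⟨hg1θ, hg2θ⟩
    have hIPθμ : Integrable (llr (P θ) μ) (P θ) := by
      refine (hint.sub hIμQ).congr ?_
      filter_upwards [hch'] with x hx
      simp only [Pi.sub_apply]
      rw [hx]; ring
    have hd_eq : (∫ x, llr (P θ) μ x ∂(P θ))
        = (∫ x, llr (P θ) Q x ∂(P θ)) - (∫ x, llr μ Q x ∂(P θ)) := by
      have hcongr : ∫ x, llr (P θ) μ x ∂(P θ)
          = ∫ x, (llr (P θ) Q x - llr μ Q x) ∂(P θ) := by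
        refine integral_congr_ae ?_
        filter_upwards [hch'] with x hx
        rw [hx]; ring
      rw [hcongr, integral_sub hint hIμQ]
    refine ⟨hIμQ, hIPθμ, hacμ, hac, hint, ?_, ?_, hd_eq, ?_, ?_⟩
    · simp only [klDiv]; rw [if_pos ⟨hacμ, hIPθμ⟩]
    · exact integral_llr_nonneg hacμ hIPθμ
    · exact integral_eq_lintegral_pos_part_sub_lintegral_neg_part hIμQ
    · simp only [klDiv]; rw [if_pos ⟨hac, hint⟩]
  -- a.e. measurability of θ ↦ ∫ llr (P θ) μ d(P θ)
  set ρμ : Θ → Ω → ℝ≥0∞ := Kernel.rnDeriv P (Kernel.const Θ μ) with hρμdef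
  have hρμ_meas : Measurable (Function.uncurry ρμ) := Kernel.measurable_rnDeriv _ _
  have hDm_sm : StronglyMeasurable fun θ => ∫ x, Real.log (ρμ θ x).toReal ∂(P θ) :=
    StronglyMeasurable.integral_kernel_prod_right
      ((Real.measurable_log.comp hρμ_meas.ennreal_toReal).stronglyMeasurable)
  have hdF_eq : (fun θ => ∫ x, llr (P θ) μ x ∂(P θ)) =ᵐ[w]
      fun θ => ∫ x, Real.log (ρμ θ x).toReal ∂(P θ) := by
    filter_upwards [hgood] with θ hth
    obtain ⟨hE1, hacμ⟩ := hth
    refine integral_congr_ae ?_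
    have h := Kernel.rnDeriv_eq_rnDeriv_measure (κ := P) (η := Kernel.const Θ μ) (a := θ)
    have h' : ρμ θ =ᵐ[μ] (P θ).rnDeriv μ := by simpa using h
    filter_upwards [hacμ.ae_le h'] with x hx
    rw [llr_def, hx]
  have hdF_aesm : AEStronglyMeasurable (fun θ => ∫ x, llr (P θ) μ x ∂(P θ)) w :=
    hDm_sm.aestronglyMeasurable.congr hdF_eq.symm
  -- representation and finiteness of the left-hand side
  have hT_repr : ∫⁻ θ, klDiv (P θ) μ ∂w
      = ∫⁻ θ, ENNReal.ofReal (∫ x, llr (P θ) μ x ∂(P θ)) ∂w :=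
    lintegral_congr_ae (by filter_upwards [hmaster] with θ h; exact h.2.2.2.2.2.1)
  have hT_le' : ∫⁻ θ, ENNReal.ofReal (∫ x, llr (P θ) μ x ∂(P θ)) ∂w
      ≤ ∫⁻ θ, (klDiv (P θ) Q + g2 θ) ∂w := by
    refine lintegral_mono_ae ?_
    filter_upwards [hmaster] with θ h
    obtain ⟨hIμQ, hIPθμ, hacμ, hac, hint, hdKL, hd0, hd_eq, hb_eq, haKL⟩ := h
    calc ENNReal.ofReal (∫ x, llr (P θ) μ x ∂(P θ))
        = ENNReal.ofReal ((∫ x, llr (P θ) Q x ∂(P θ)) + -(∫ x, llr μ Q x ∂(P θ))) := by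
          rw [hd_eq]; ring_nf
      _ ≤ ENNReal.ofReal (∫ x, llr (P θ) Q x ∂(P θ))
          + ENNReal.ofReal (-(∫ x, llr μ Q x ∂(P θ))) := ENNReal.ofReal_add_le
      _ ≤ klDiv (P θ) Q + g2 θ := by
          refine add_le_add ?_ ?_
          · rw [haKL]
          · have : -(∫ x, llr μ Q x ∂(P θ)) = ∫ x, -llr μ Q x ∂(P θ) := by
              rw [integral_neg]
            rw [this]
            exact ofReal_integral_le hIμQ.neg
  have hTw_fin : ∫⁻ θ, ENNReal.ofReal (∫ x, llr (P θ) μ x ∂(P θ)) ∂w ≠ ∞ := by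
    refine ne_top_of_le_ne_top ?_ hT_le'
    rw [lintegral_add_right' _ hg2_meas.aemeasurable]
    exact ENNReal.add_ne_top.mpr ⟨hC, hg2w_fin⟩
  have hd0ae : ∀ᵐ θ ∂w, (0:ℝ) ≤ ∫ x, llr (P θ) μ x ∂(P θ) := by
    filter_upwards [hmaster] with θ h; exact h.2.2.2.2.2.2.1
  have hdInt : Integrable (fun θ => ∫ x, llr (P θ) μ x ∂(P θ)) w := by
    refine ⟨hdF_aesm, ?_⟩
    rw [hasFiniteIntegral_iff_ofReal hd0ae]
    exact hTw_fin.lt_top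
  have hT_eq : ∫⁻ θ, klDiv (P θ) μ ∂w
      = ENNReal.ofReal (∫ θ, (∫ x, llr (P θ) μ x ∂(P θ)) ∂w) := by
    rw [hT_repr, ← ofReal_integral_eq_lintegral_ofReal hdInt hd0ae]
  -- integrability over w of the other pieces
  have hg1R : Integrable (fun θ => (g1 θ).toReal) w :=
    integrable_toReal_of_lintegral_ne_top hg1_meas.aemeasurable hg1w_fin
  have hg2R : Integrable (fun θ => (g2 θ).toReal) w :=
    integrable_toReal_of_lintegral_ne_top hg2_meas.aemeasurable hg2w_fin
  have hbInt : Integrable (fun θ => ∫ x, llr μ Q x ∂(P θ)) w := by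
    refine ((hg1R.sub hg2R).congr ?_)
    filter_upwards [hmaster] with θ h
    exact h.2.2.2.2.2.2.2.2.1.symm
  have haInt : Integrable (fun θ => ∫ x, llr (P θ) Q x ∂(P θ)) w := by
    refine ((hdInt.add hbInt).congr ?_)
    filter_upwards [hmaster] with θ h
    have hd_eq := h.2.2.2.2.2.2.2.1
    simp only [Pi.add_apply]
    linarith
  -- the compensation term is nonnegative
  have hbw : ∫ θ, (∫ x, llr μ Q x ∂(P θ)) ∂w = ∫ x, llr μ Q x ∂μ := by
    have h1 : ∫ θ, (∫ x, llr μ Q x ∂(P θ)) ∂w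
        = ∫ θ, ((g1 θ).toReal - (g2 θ).toReal) ∂w := by
      refine integral_congr_ae ?_
      filter_upwards [hmaster] with θ h
      exact h.2.2.2.2.2.2.2.2.1
    rw [h1, integral_sub hg1R hg2R,
      integral_toReal hg1_meas.aemeasurable (ae_lt_top hg1_meas hg1w_fin),
      integral_toReal hg2_meas.aemeasurable (ae_lt_top hg2_meas hg2w_fin),
      hG_def, hH_def,
      integral_eq_lintegral_pos_part_sub_lintegral_neg_part hμ_int]
  have hb_nonneg : 0 ≤ ∫ θ, (∫ x, llr μ Q x ∂(P θ)) ∂w := by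
    rw [hbw]; exact integral_llr_nonneg hμQ hμ_int
  have hsum : ∫ θ, (∫ x, llr (P θ) μ x ∂(P θ)) ∂w
      = (∫ θ, (∫ x, llr (P θ) Q x ∂(P θ)) ∂w) - ∫ θ, (∫ x, llr μ Q x ∂(P θ)) ∂w := by
    rw [← integral_sub haInt hbInt]
    refine integral_congr_ae ?_
    filter_upwards [hmaster] with θ h
    exact h.2.2.2.2.2.2.2.1
  calc ∫⁻ θ, klDiv (P θ) μ ∂w
      = ENNReal.ofReal (∫ θ, (∫ x, llr (P θ) μ x ∂(P θ)) ∂w) := hT_eq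
    _ ≤ ENNReal.ofReal (∫ θ, (∫ x, llr (P θ) Q x ∂(P θ)) ∂w) := by
        refine ENNReal.ofReal_le_ofReal ?_
        rw [hsum]; linarith
    _ ≤ ∫⁻ θ, ENNReal.ofReal (∫ x, llr (P θ) Q x ∂(P θ)) ∂w := ofReal_integral_le haInt
    _ = ∫⁻ θ, klDiv (P θ) Q ∂w := by
        refine lintegral_congr_ae ?_
        filter_upwards [hmaster] with θ h
        exact h.2.2.2.2.2.2.2.2.2.symm

/-- **One direction of the regret-capacity identity.** For every probability measure `Q`
on the output and every prior `w` on the parameters, the worst-case divergence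
`sup_θ D(P_θ‖Q)` dominates the mutual information `∫ D(P_θ‖P_w) w(dθ)`; consequently
`inf_Q sup_θ D(P_θ‖Q) ≥ sup_w ∫ D(P_θ‖P_w) w(dθ)`. -/
theorem minimax_ge_regret_capacity
    {Θ Ω : Type*} [MeasurableSpace Θ] [StandardBorelSpace Θ]
    [MeasurableSpace Ω] [StandardBorelSpace Ω]
    (P : Kernel Θ Ω) [IsMarkovKernel P] :
    (∀ (Q : Measure Ω), IsProbabilityMeasure Q →
      ∀ (w : Measure Θ), IsProbabilityMeasure w →
        ∫⁻ θ, klDiv (P θ) (w.bind (fun θ => P θ)) ∂w ≤ ⨆ θ : Θ, klDiv (P θ) Q)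
    ∧ (⨆ (w : Measure Θ) (_ : IsProbabilityMeasure w),
          ∫⁻ θ, klDiv (P θ) (w.bind (fun θ => P θ)) ∂w)
        ≤ ⨅ (Q : Measure Ω) (_ : IsProbabilityMeasure Q), ⨆ θ : Θ, klDiv (P θ) Q := by
  have main : ∀ (Q : Measure Ω), IsProbabilityMeasure Q →
      ∀ (w : Measure Θ), IsProbabilityMeasure w →
        ∫⁻ θ, klDiv (P θ) (w.bind (fun θ => P θ)) ∂w ≤ ⨆ θ : Θ, klDiv (P θ) Q := by
    intro Q hQ w hw
    haveI := hQ; haveI := hw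
    calc ∫⁻ θ, klDiv (P θ) (w.bind (fun θ => P θ)) ∂w
        ≤ ∫⁻ θ, klDiv (P θ) Q ∂w := key_ineq P Q w
      _ ≤ ∫⁻ _, (⨆ θ : Θ, klDiv (P θ) Q) ∂w :=
          lintegral_mono fun θ => le_iSup (fun θ => klDiv (P θ) Q) θ
      _ = ⨆ θ : Θ, klDiv (P θ) Q := by rw [lintegral_const, measure_univ, mul_one]
  exact ⟨main, iSup₂_le fun w hw => le_iInf₂ fun Q hQ => main Q hQ w hw⟩
end

section
/- Let C ≥ 0, ε > 0 and p ∈ (0,1]. Let H₂(p) = −p·log₂ p − (1−p)·log₂(1−p) denote the binary entropy (base 2), with the convention 0·log₂ 0 = 0. If C ≤ H₂(p) + ((1−ε)·p + (1−p))·C, then p ≤ e·2^{−εC}, where e is Euler's number. -/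
open Real

/-- **Arithmetic core of the strong regret-capacity theorem.** If `C ≥ 0`, `ε > 0`,
`p ∈ (0,1]` and `C ≤ H₂(p) + ((1−ε)p + (1−p))·C`, where `H₂` is the binary entropy
(base 2), then `p ≤ e·2^(−εC)`. -/
theorem strong_regret_capacity_arith
    (C ε p : ℝ) (hC : 0 ≤ C) (hε : 0 < ε) (hp0 : 0 < p) (hp1 : p ≤ 1)
    (h : C ≤ (-p * Real.logb 2 p - (1 - p) * Real.logb 2 (1 - p))
        + ((1 - ε) * p + (1 - p)) * C) :
    p ≤ Real.exp 1 * (2 : ℝ) ^ (-(ε * C)) := by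
  have hlog2 : (0:ℝ) < Real.log 2 := Real.log_pos (by norm_num)
  -- rearrange hypothesis: ε p C ≤ H₂(p)
  have key : ε * p * C ≤ -p * Real.logb 2 p - (1 - p) * Real.logb 2 (1 - p) := by
    nlinarith [h]
  simp only [Real.logb] at key
  -- multiply by log 2
  have hln : ε * p * C * Real.log 2 ≤ -p * Real.log p - (1 - p) * Real.log (1 - p) := by
    have h2 := mul_le_mul_of_nonneg_right key hlog2.le
    have hne : Real.log 2 ≠ 0 := hlog2.ne'
    have e1 : Real.log p / Real.log 2 * Real.log 2 = Real.log p := div_mul_cancel₀ _ hne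
    have e2 : Real.log (1 - p) / Real.log 2 * Real.log 2 = Real.log (1 - p) :=
      div_mul_cancel₀ _ hne
    nlinarith [h2, e1, e2]
  -- binary entropy second-term bound: -(1-p) log(1-p) ≤ p
  have hent : -(1 - p) * Real.log (1 - p) ≤ p := by
    rcases eq_or_lt_of_le hp1 with h1 | h1
    · subst h1; norm_num
    · have h1p : 0 < 1 - p := by linarith
      have hlog := Real.log_le_sub_one_of_pos (inv_pos.mpr h1p)
      rw [Real.log_inv] at hlog
      have hinv : (1 - p) * (1 - p)⁻¹ = 1 := mul_inv_cancel₀ h1p.ne'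
      nlinarith [hlog, h1p, hinv]
  have hstep : ε * p * C * Real.log 2 ≤ -p * Real.log p + p := by linarith
  -- divide by p
  have hdiv : ε * C * Real.log 2 ≤ -Real.log p + 1 := by
    have : p * (ε * C * Real.log 2) ≤ p * (-Real.log p + 1) := by nlinarith
    exact (mul_le_mul_iff_right₀ hp0).mp this
  rw [Real.rpow_def_of_pos (by norm_num : (0:ℝ) < 2), ← Real.exp_add]
  calc p = Real.exp (Real.log p) := (Real.exp_log hp0).symm
    _ ≤ _ := Real.exp_le_exp.mpr (by nlinarith)
end

section
/- Let N, n be positive natural numbers and Φ a real N×n matrix such that ΦᵀΦ is invertible. Fix y ∈ ℝᴺ. Then for every a ∈ ℝⁿ, exp(−½‖y − Φa‖²) / exp(−½ (Φᵀy − ΦᵀΦa)ᵀ (ΦᵀΦ)⁻¹ (Φᵀy − ΦᵀΦa)) = exp(−½ (yᵀy − yᵀ Φ (ΦᵀΦ)⁻¹ Φᵀ y)). In particular, this ratio of (unnormalized) Gaussian densities is independent of a. -/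
open Matrix Real

/-- **Sufficiency of projections for the Gaussian channel (Lemma 2).** For an `N × n`
real matrix `Φ` with `ΦᵀΦ` invertible and a fixed observation `y`, the ratio of the
unnormalized Gaussian density of `y` (mean `Φa`) to that of the projection `Φᵀy`
(mean `ΦᵀΦa`, covariance `ΦᵀΦ`) equals `exp(−½(yᵀy − yᵀΦ(ΦᵀΦ)⁻¹Φᵀy))`, independently
of `a`. (The squared Euclidean norm `‖v‖²` is written as the dot product `v ⬝ᵥ v`.) -/
theorem gaussian_density_ratio_independent_of_signal
    (N n : ℕ) (hN : 0 < N) (hn : 0 < n)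
    (Φ : Matrix (Fin N) (Fin n) ℝ) (hinv : IsUnit (Φᵀ * Φ))
    (y : Fin N → ℝ) :
    ∀ a : Fin n → ℝ,
      Real.exp (-(1 / 2) * ((y - Φ.mulVec a) ⬝ᵥ (y - Φ.mulVec a)))
        / Real.exp (-(1 / 2) * ((Φᵀ.mulVec y - (Φᵀ * Φ).mulVec a) ⬝ᵥ
            ((Φᵀ * Φ)⁻¹.mulVec (Φᵀ.mulVec y - (Φᵀ * Φ).mulVec a))))
      = Real.exp (-(1 / 2) * (y ⬝ᵥ y - y ⬝ᵥ (Φ * (Φᵀ * Φ)⁻¹ * Φᵀ).mulVec y)) := by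
  intro a
  set G := Φᵀ * Φ with hG
  have hdet : IsUnit G.det := (Matrix.isUnit_iff_isUnit_det G).mp hinv
  have hGinvG : G⁻¹ * G = 1 := Matrix.nonsing_inv_mul G hdet
  have hGGinv : G * G⁻¹ = 1 := Matrix.mul_nonsing_inv G hdet
  have hGT : Gᵀ = G := by rw [hG, Matrix.transpose_mul, Matrix.transpose_transpose]
  set u := Φᵀ.mulVec y with hu
  have hu' : u = y ᵥ* Φ := by rw [hu, Matrix.mulVec_transpose]
  -- key scalar facts
  have h1 : ∀ x w : Fin n → ℝ, (G *ᵥ x) ⬝ᵥ (G⁻¹ *ᵥ w) = x ⬝ᵥ w := by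
    intro x w
    rw [Matrix.dotProduct_mulVec, Matrix.vecMul_mulVec, hGT, hGGinv, Matrix.vecMul_one]
  have h2 : ∀ x : Fin n → ℝ, G⁻¹ *ᵥ (G *ᵥ x) = x := by
    intro x
    rw [Matrix.mulVec_mulVec, hGinvG, Matrix.one_mulVec]
  have hPhiPhi : (Φ *ᵥ a) ⬝ᵥ (Φ *ᵥ a) = a ⬝ᵥ (G *ᵥ a) := by
    rw [Matrix.dotProduct_mulVec, Matrix.vecMul_mulVec, ← hG, ← hGT,
      Matrix.vecMul_transpose, hGT, dotProduct_comm]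
  have hyPhi : y ⬝ᵥ (Φ *ᵥ a) = u ⬝ᵥ a := by
    rw [Matrix.dotProduct_mulVec, hu']
  have hRHS : y ⬝ᵥ ((Φ * G⁻¹ * Φᵀ) *ᵥ y) = u ⬝ᵥ (G⁻¹ *ᵥ u) := by
    rw [← Matrix.mulVec_mulVec, ← Matrix.mulVec_mulVec, Matrix.dotProduct_mulVec, ← hu', ← hu]
  -- expand the two quadratic forms
  have hE1 : (y - Φ *ᵥ a) ⬝ᵥ (y - Φ *ᵥ a)
      = y ⬝ᵥ y - 2 * (u ⬝ᵥ a) + a ⬝ᵥ (G *ᵥ a) := by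
    rw [sub_dotProduct, dotProduct_sub, dotProduct_sub,
      hPhiPhi, hyPhi, dotProduct_comm (Φ *ᵥ a) y, hyPhi]
    ring
  have hE2 : (u - G *ᵥ a) ⬝ᵥ (G⁻¹ *ᵥ (u - G *ᵥ a))
      = u ⬝ᵥ (G⁻¹ *ᵥ u) - 2 * (u ⬝ᵥ a) + a ⬝ᵥ (G *ᵥ a) := by
    rw [Matrix.mulVec_sub, sub_dotProduct, dotProduct_sub,
      dotProduct_sub, h1, h1, h2, dotProduct_comm a u]
    ring
  rw [← Real.exp_sub]
  congr 1
  rw [hE1, hE2, hRHS]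
  ring
end
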